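/- arXiv:2211.15366 — 3 statements merged into one kernel-verified Lean document; each statement's English description precedes it below -/
import Mathlib

section
/- Let n ∈ ℕ and A ∈ ℕ, and let G and G' be simple graphs on the same vertex set of n vertices that are A-edge-adjacent. Then for every index i ∈ {1, …, n}, the i-th smallest eigenvalues of their Laplacians satisfy |λ_i(G) − λ_i(G')| ≤ 2A. -/
/-!
For self-adjoint `T, T'` on an `n`-dimensional real inner product space with
`⟪T' x, x⟫ ≤ ⟪T x, x⟫ + c‖x‖²`, the `i`-th largest eigenvalues satisfy `λᵢ(T') ≤ λᵢ(T) + c`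
(Weyl): the span of the top `i + 1` eigenvectors of `T'` and the span of the bottom `n - i`
eigenvectors of `T` meet in some `x ≠ 0`, and comparing Rayleigh quotients at `x` gives the bound.

For Laplacians, `xᵀL(G')x ≤ xᵀL(G)x + xᵀL(G' \ G)x`, and every edge `uv` contributes
`(x_u - x_v)² ≤ 2‖x‖²`, so `c = 2|E(G') \ E(G)| ≤ 2A` works; exchanging `G` and `G'` gives the
other half of the absolute value.
-/

open Matrix

/-- The eigenvalues of the Laplacian matrix of a finite simple graph,
listed in nondecreasing order. -/
noncomputable def sortedLapEigs {V : Type*} [Fintype V] [DecidableEq V]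
    (G : SimpleGraph V) [DecidableRel G.Adj] : Fin (Fintype.card V) → ℝ :=
  let f : Fin (Fintype.card V) → ℝ :=
    (SimpleGraph.posSemidef_lapMatrix (R := ℝ) G).isHermitian.eigenvalues ∘
      (Fintype.equivFin V).symm
  f ∘ Tuple.sort f

open Module Submodule Finset
open scoped RealInnerProductSpace

theorem Submodule.exists_ne_zero_mem_inf_of_finrank_lt {K V : Type*} [DivisionRing K]
    [AddCommGroup V] [Module K V] [FiniteDimensional K V] {U W : Submodule K V}
    (h : finrank K V < finrank K U + finrank K W) : ∃ x ∈ U ⊓ W, x ≠ 0 := by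
  have hinf : 0 < finrank K ↥(U ⊓ W) := by
    have := Submodule.finrank_sup_add_finrank_inf_eq U W
    have := Submodule.finrank_le (U ⊔ W)
    omega
  have := Module.nontrivial_of_finrank_pos hinf
  exact (Submodule.ne_bot_iff _).mp (Submodule.nontrivial_iff_ne_bot.mp this)

namespace OrthonormalBasis

variable {ι 𝕜 E : Type*} [Fintype ι] [RCLike 𝕜] [NormedAddCommGroup E] [InnerProductSpace 𝕜 E]
  (b : OrthonormalBasis ι 𝕜 E)

theorem repr_eq_zero_of_mem_span_image {S : Set ι} {x : E} (hx : x ∈ span 𝕜 (b '' S)) {j : ι}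
    (hj : j ∉ S) : b.repr x j = 0 := by
  rw [← b.coe_toBasis, b.toBasis.mem_span_image] at hx
  simpa [b.coe_toBasis_repr_apply] using Finsupp.notMem_support_iff.mp fun h => hj (hx h)

theorem finrank_span_image (S : Finset ι) : finrank 𝕜 (span 𝕜 (b '' S)) = #S := by
  have hb : LinearIndependent 𝕜 fun j : (S : Set ι) => b j :=
    (b.orthonormal.comp _ Subtype.val_injective).linearIndependent
  rw [Set.image_eq_range, finrank_span_eq_card hb]
  simp

end OrthonormalBasis

theorem OrthonormalBasis.norm_sq_eq_sum_repr_sq {ι E : Type*} [Fintype ι] [NormedAddCommGroup E]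
    [InnerProductSpace ℝ E] (b : OrthonormalBasis ι ℝ E) (x : E) :
    ‖x‖ ^ 2 = ∑ j, b.repr x j ^ 2 := by
  rw [← b.repr.norm_map, EuclideanSpace.real_norm_sq_eq]

namespace LinearMap.IsSymmetric

variable {E : Type*} [NormedAddCommGroup E] [InnerProductSpace ℝ E] [FiniteDimensional ℝ E]
  {T : E →ₗ[ℝ] E} (hT : T.IsSymmetric) {n : ℕ} (hn : finrank ℝ E = n)

theorem inner_apply_self_eq_sum_eigenvalues (x : E) :
    ⟪T x, x⟫ = ∑ j, hT.eigenvalues hn j * (hT.eigenvectorBasis hn).repr x j ^ 2 := by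
  rw [← (hT.eigenvectorBasis hn).repr.inner_map_map, PiLp.inner_apply]
  simp only [eigenvectorBasis_apply_self_apply, RCLike.inner_apply, conj_trivial,
    RCLike.ofReal_real_eq_id, id_eq]
  exact Finset.sum_congr rfl fun j _ => by ring

theorem inner_apply_self_le_of_mem_span {S : Set (Fin n)} {c : ℝ}
    (hc : ∀ j ∈ S, hT.eigenvalues hn j ≤ c) {x : E}
    (hx : x ∈ span ℝ (hT.eigenvectorBasis hn '' S)) : ⟪T x, x⟫ ≤ c * ‖x‖ ^ 2 := by
  rw [hT.inner_apply_self_eq_sum_eigenvalues hn, (hT.eigenvectorBasis hn).norm_sq_eq_sum_repr_sq,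
    Finset.mul_sum]
  refine Finset.sum_le_sum fun j _ => ?_
  by_cases hj : j ∈ S
  · exact mul_le_mul_of_nonneg_right (hc j hj) (sq_nonneg _)
  · simp [(hT.eigenvectorBasis hn).repr_eq_zero_of_mem_span_image hx hj]

theorem le_inner_apply_self_of_mem_span {S : Set (Fin n)} {c : ℝ}
    (hc : ∀ j ∈ S, c ≤ hT.eigenvalues hn j) {x : E}
    (hx : x ∈ span ℝ (hT.eigenvectorBasis hn '' S)) : c * ‖x‖ ^ 2 ≤ ⟪T x, x⟫ := by
  rw [hT.inner_apply_self_eq_sum_eigenvalues hn, (hT.eigenvectorBasis hn).norm_sq_eq_sum_repr_sq,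
    Finset.mul_sum]
  refine Finset.sum_le_sum fun j _ => ?_
  by_cases hj : j ∈ S
  · exact mul_le_mul_of_nonneg_right (hc j hj) (sq_nonneg _)
  · simp [(hT.eigenvectorBasis hn).repr_eq_zero_of_mem_span_image hx hj]

theorem eigenvalues_le_add {T' : E →ₗ[ℝ] E} (hT' : T'.IsSymmetric) {c : ℝ}
    (h : ∀ x, ⟪T' x, x⟫ ≤ ⟪T x, x⟫ + c * ‖x‖ ^ 2) (i : Fin n) :
    hT'.eigenvalues hn i ≤ hT.eigenvalues hn i + c := by
  set U' := span ℝ (hT'.eigenvectorBasis hn '' ↑(Finset.Iic i))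
  set U := span ℝ (hT.eigenvectorBasis hn '' ↑(Finset.Ici i))
  have hdim : finrank ℝ E < finrank ℝ U' + finrank ℝ U := by
    simp only [U, U', OrthonormalBasis.finrank_span_image, Fin.card_Iic, Fin.card_Ici]
    omega
  obtain ⟨x, ⟨hxU', hxU⟩, hx0⟩ := Submodule.exists_ne_zero_mem_inf_of_finrank_lt hdim
  have hlow := hT'.le_inner_apply_self_of_mem_span hn
    (fun j hj => hT'.eigenvalues_antitone hn (Finset.mem_Iic.mp hj)) hxU'
  have hup := hT.inner_apply_self_le_of_mem_span hn
    (fun j hj => hT.eigenvalues_antitone hn (Finset.mem_Ici.mp hj)) hxU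
  refine le_of_mul_le_mul_right ?_ (by positivity : 0 < ‖x‖ ^ 2)
  calc hT'.eigenvalues hn i * ‖x‖ ^ 2 ≤ ⟪T' x, x⟫ := hlow
    _ ≤ ⟪T x, x⟫ + c * ‖x‖ ^ 2 := h x
    _ ≤ (hT.eigenvalues hn i + c) * ‖x‖ ^ 2 := by linarith

end LinearMap.IsSymmetric

namespace Matrix.IsHermitian

variable {n : Type*} [Fintype n] [DecidableEq n] {A : Matrix n n ℝ} (hA : A.IsHermitian)

theorem eigenvalues₀_le_add {B : Matrix n n ℝ} (hB : B.IsHermitian) {c : ℝ}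
    (h : ∀ x : n → ℝ, x ⬝ᵥ B *ᵥ x ≤ x ⬝ᵥ A *ᵥ x + c * (x ⬝ᵥ x)) (i : Fin (Fintype.card n)) :
    hB.eigenvalues₀ i ≤ hA.eigenvalues₀ i + c := by
  refine LinearMap.IsSymmetric.eigenvalues_le_add _ _ _ (fun x => ?_) i
  rw [EuclideanSpace.real_norm_sq_eq]
  simpa [EuclideanSpace.inner_eq_star_dotProduct, dotProduct, sq] using h x.ofLp

/-- `eigenvalues₀` is sorted decreasingly, so sorting any enumeration of the eigenvalues
increasingly yields its reversal. -/
theorem eigenvalues_comp_comp_sort (e : Fin (Fintype.card n) ≃ n) :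
    (hA.eigenvalues ∘ e) ∘ Tuple.sort (hA.eigenvalues ∘ e) = hA.eigenvalues₀ ∘ Fin.rev := by
  set π : Equiv.Perm (Fin (Fintype.card n)) :=
    e.trans (Fintype.equivOfCardEq (Fintype.card_fin _)).symm
  have hπ : hA.eigenvalues ∘ e = hA.eigenvalues₀ ∘ π := rfl
  rw [hπ, Tuple.comp_perm_comp_sort_eq_comp_sort]
  exact Tuple.unique_monotone (σ := Tuple.sort hA.eigenvalues₀) (τ := Fin.revPerm)
    (Tuple.monotone_sort _) (hA.eigenvalues₀_antitone.comp Fin.rev_anti)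

end Matrix.IsHermitian

namespace SimpleGraph

variable {V R : Type*} [Fintype V] [DecidableEq V] [Field R] [LinearOrder R] [IsStrictOrderedRing R]

theorem dotProduct_lapMatrix_mulVec (G : SimpleGraph V) [DecidableRel G.Adj] (x : V → R) :
    x ⬝ᵥ G.lapMatrix R *ᵥ x = (∑ i, ∑ j, if G.Adj i j then (x i - x j) ^ 2 else 0) / 2 := by
  rw [← Matrix.toLinearMap₂'_apply', lapMatrix_toLinearMap₂']

theorem dotProduct_lapMatrix_mulVec_le_add_sdiff (G H : SimpleGraph V) [DecidableRel G.Adj]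
    [DecidableRel H.Adj] (x : V → R) :
    x ⬝ᵥ H.lapMatrix R *ᵥ x ≤ x ⬝ᵥ G.lapMatrix R *ᵥ x + x ⬝ᵥ (H \ G).lapMatrix R *ᵥ x := by
  simp only [dotProduct_lapMatrix_mulVec, ← add_div, ← sum_add_distrib]
  gcongr with i _ j _
  by_cases hH : H.Adj i j <;> by_cases hG : G.Adj i j <;> simp [hH, hG, sq_nonneg]

theorem sub_sq_le_two_mul_dotProduct_self (x : V → R) {i j : V} (hij : i ≠ j) :
    (x i - x j) ^ 2 ≤ 2 * (x ⬝ᵥ x) := by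
  have hpair : x i ^ 2 + x j ^ 2 ≤ x ⬝ᵥ x := by
    simpa [sum_pair hij, dotProduct, sq] using
      sum_le_sum_of_subset_of_nonneg (f := fun k => x k ^ 2) (subset_univ {i, j})
        fun k _ _ => sq_nonneg (x k)
  nlinarith [sq_nonneg (x i + x j)]

theorem dotProduct_lapMatrix_mulVec_le_card_edgeFinset (G : SimpleGraph V) [DecidableRel G.Adj]
    [Fintype G.edgeSet] (x : V → R) : x ⬝ᵥ G.lapMatrix R *ᵥ x ≤ 2 * #G.edgeFinset * (x ⬝ᵥ x) := by
  have hsum : (∑ i, ∑ j, if G.Adj i j then (x i - x j) ^ 2 else 0) ≤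
      ∑ i, ∑ j, if G.Adj i j then 2 * (x ⬝ᵥ x) else 0 := by
    gcongr with i _ j _
    split_ifs with h
    exacts [sub_sq_le_two_mul_dotProduct_self x h.ne, le_rfl]
  have hdeg : (∑ i, ∑ j, if G.Adj i j then 2 * (x ⬝ᵥ x) else 0) =
      2 * #G.edgeFinset * (2 * (x ⬝ᵥ x)) := by
    have handshake : ∑ i, #{j | G.Adj i j} = 2 * #G.edgeFinset := by
      convert G.sum_degrees_eq_twice_card_edges using 3 <;> simp [degree, neighborFinset_eq_filter]
    simp_rw [← sum_filter, sum_const, nsmul_eq_mul, ← sum_mul]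
    exact_mod_cast congr($handshake * (2 * (x ⬝ᵥ x)))
  rw [dotProduct_lapMatrix_mulVec]
  linarith

theorem dotProduct_lapMatrix_mulVec_le (G H : SimpleGraph V) [DecidableRel G.Adj]
    [DecidableRel H.Adj] (x : V → R) :
    x ⬝ᵥ H.lapMatrix R *ᵥ x ≤
      x ⬝ᵥ G.lapMatrix R *ᵥ x + 2 * #(H.edgeFinset \ G.edgeFinset) * (x ⬝ᵥ x) := by
  have hsdiff := (H \ G).dotProduct_lapMatrix_mulVec_le_card_edgeFinset x
  rw [edgeFinset_sdiff] at hsdiff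
  linarith [G.dotProduct_lapMatrix_mulVec_le_add_sdiff H x]

theorem sortedLapEigs_eq (G : SimpleGraph V) [DecidableRel G.Adj] :
    sortedLapEigs G = (posSemidef_lapMatrix ℝ G).isHermitian.eigenvalues₀ ∘ Fin.rev :=
  Matrix.IsHermitian.eigenvalues_comp_comp_sort _ _

theorem sortedLapEigs_le_add (G H : SimpleGraph V) [DecidableRel G.Adj] [DecidableRel H.Adj]
    (i : Fin (Fintype.card V)) :
    sortedLapEigs H i ≤ sortedLapEigs G i + 2 * #(H.edgeFinset \ G.edgeFinset) := by
  simp only [sortedLapEigs_eq, Function.comp_apply]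
  exact Matrix.IsHermitian.eigenvalues₀_le_add _ _ (dotProduct_lapMatrix_mulVec_le G H) _

end SimpleGraph

/-- If two simple graphs on the same vertex set of `n` vertices are `A`-edge-adjacent
(the symmetric difference of their edge sets has cardinality at most `A`), then for
every index `i`, the `i`-th smallest Laplacian eigenvalues differ by at most `2 * A`. -/
theorem edge_sensitivity_bound (n A : ℕ) (G G' : SimpleGraph (Fin n))
    [DecidableRel G.Adj] [DecidableRel G'.Adj]
    (hadj : (symmDiff G.edgeFinset G'.edgeFinset).card ≤ A)
    (i : Fin n) :
    |sortedLapEigs G (Fin.cast (Fintype.card_fin n).symm i)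
      - sortedLapEigs G' (Fin.cast (Fintype.card_fin n).symm i)| ≤ (2 * A : ℝ) := by
  rw [symmDiff_def] at hadj
  have hGG' : (#(G.edgeFinset \ G'.edgeFinset) : ℝ) ≤ A := by
    exact_mod_cast (card_le_card subset_union_left).trans hadj
  have hG'G : (#(G'.edgeFinset \ G.edgeFinset) : ℝ) ≤ A := by
    exact_mod_cast (card_le_card subset_union_right).trans hadj
  rw [abs_sub_le_iff]
  constructor
  · linarith [G'.sortedLapEigs_le_add G (Fin.cast (Fintype.card_fin n).symm i)]
  · linarith [G.sortedLapEigs_le_add G' (Fin.cast (Fintype.card_fin n).symm i)]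
end

section
/- Let ε > 0, δ ∈ (0, 1), n ∈ ℕ, and A ∈ ℕ with 0 < 2A ≤ n. Suppose b > 0 satisfies ε − log ΔC(b) − log(1 − δ) > 0 and b ≥ 2A / (ε − log ΔC(b) − log(1 − δ)), where ΔC(b) = (2 − e^{−2A/b} − e^{−(n−2A)/b}) / (1 − e^{−n/b}). Then for all λ, λ' ∈ [0, n] with |λ − λ'| ≤ 2A (in particular, for corresponding Laplacian eigenvalues of any two A-edge-adjacent graphs on n vertices) and for every Borel set S ⊆ ℝ, μ_{λ,b}(S) ≤ e^ε · μ_{λ',b}(S) + δ. -/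
open MeasureTheory

/-- The normalizing constant of the bounded Laplace mechanism on `[0, n]`. -/
noncomputable def Cnorm (n : ℕ) (lam b : ℝ) : ℝ :=
  ∫ x in (0 : ℝ)..(n : ℝ), (1 / (2 * b)) * Real.exp (-|x - lam| / b)

/-- The bounded Laplace distribution on `[0, n]` with location `lam` and scale `b`:
the probability measure on `ℝ` with density
`x ↦ (1/(2b·C(lam,b))) e^{−|x−lam|/b}` on `[0, n]` and `0` elsewhere. -/
noncomputable def boundedLaplace (n : ℕ) (lam b : ℝ) : Measure ℝ :=
  volume.withDensity fun x =>
    if x ∈ Set.Icc (0 : ℝ) (n : ℝ) then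
      ENNReal.ofReal ((1 / (2 * b * Cnorm n lam b)) * Real.exp (-|x - lam| / b))
    else 0

/-!
Write `g(t) = 2 - e^{-t/b} - e^{-(n-t)/b}`, so that `2 C(λ, b) = g(λ)` and `μ_{λ,b}` has density
`e^{-|x-λ|/b} / (b g(λ))` on `[0, n]`. By the triangle inequality the density ratio of `μ_{λ,b}`
to `μ_{λ',b}` is at most `e^{d/b} g(λ') / g(λ)` with `d = |λ - λ'|`. In the variables
`p = e^{-s/b}`, `q = e^{-(t-s)/b}`, `r = e^{-n/b}` the inequality `g(t) g(0) ≤ g(s) g(t - s)` is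
polynomial, which bounds `g(λ') / g(λ)` by `g(d) / g(0)`; and `t ↦ g(t) e^{t/b}` increases on
`(-∞, n]`. Hence `μ_{λ,b} ≤ K μ_{λ',b}` with `K = ΔC(b) e^{2A/b}`, and the choice of `b` gives
`K ≤ e^ε / (1 - δ)`. Since also `μ_{λ,b}(S) ≤ 1`,
`μ_{λ,b}(S) ≤ min (1, e^ε μ_{λ',b}(S) / (1 - δ)) ≤ e^ε μ_{λ',b}(S) + δ`.
-/

open Real Set

lemma exp_div_le_one {x b : ℝ} (hx : x ≤ 0) (hb : 0 ≤ b) : exp (x / b) ≤ 1 :=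
  exp_le_one_iff.2 (div_nonpos_of_nonpos_of_nonneg hx hb)

lemma two_sub_mul_sub_div_mul_one_sub_le {p q r : ℝ} (hp : 0 < p) (hq : 0 < q) (hp1 : p ≤ 1)
    (hq1 : q ≤ 1) (hr : 0 ≤ r) (hrpq : r ≤ p * q) :
    (2 - p * q - r / (p * q)) * (1 - r) ≤ (2 - p - r / p) * (2 - q - r / q) := by
  have hpq := mul_pos hp hq
  have hrs : r * (p + q + p * q - 1) ≤ 2 * (p * q) := by
    rcases le_or_gt 0 (p + q + p * q - 1) with hs | hs
    · calc r * (p + q + p * q - 1) ≤ p * q * (p + q + p * q - 1) := by gcongr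
        _ ≤ p * q * 2 := by gcongr; nlinarith
        _ = 2 * (p * q) := by ring
    · nlinarith [mul_nonpos_of_nonneg_of_nonpos hr hs.le]
  -- after clearing denominators, the difference of the two sides is this product
  have key := mul_nonneg (mul_nonneg (sub_nonneg.2 hp1) (sub_nonneg.2 hq1)) (sub_nonneg.2 hrs)
  rw [← mul_le_mul_iff_of_pos_right hpq]
  field_simp
  linear_combination key

noncomputable def laplaceMass (n t b : ℝ) : ℝ :=
  2 - exp (-t / b) - exp (-(n - t) / b)

section laplaceMass

variable {n b : ℝ}

lemma laplaceMass_zero : laplaceMass n 0 b = 1 - exp (-n / b) := by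
  simp only [laplaceMass, neg_zero, zero_div, exp_zero, sub_zero]
  ring

lemma laplaceMass_sub_left (t : ℝ) : laplaceMass n (n - t) b = laplaceMass n t b := by
  simp only [laplaceMass, sub_sub_cancel, neg_sub]
  ring_nf

lemma laplaceMass_pos (hb : 0 < b) (hn : 0 < n) {t : ℝ} (ht : t ∈ Icc 0 n) :
    0 < laplaceMass n t b := by
  have hu : exp (-t / b) ≤ 1 := exp_div_le_one (by linarith [ht.1]) hb.le
  have hv : exp (-(n - t) / b) ≤ 1 := exp_div_le_one (by linarith [ht.2]) hb.le
  have huv : exp (-t / b) * exp (-(n - t) / b) < 1 := by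
    rw [← exp_add, ← add_div]
    exact exp_lt_one_iff.2 (div_neg_of_neg_of_pos (by linarith) hb)
  unfold laplaceMass
  nlinarith [mul_nonneg (sub_nonneg.2 hu) (sub_nonneg.2 hv)]

lemma laplaceMass_mul_laplaceMass_zero_le (hb : 0 < b) {s t : ℝ} (hs : 0 ≤ s) (hst : s ≤ t)
    (htn : t ≤ n) :
    laplaceMass n t b * laplaceMass n 0 b ≤ laplaceMass n s b * laplaceMass n (t - s) b := by
  set p := exp (-s / b)
  set q := exp (-(t - s) / b)
  set r := exp (-n / b)
  have hp1 : p ≤ 1 := exp_div_le_one (by linarith) hb.le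
  have hq1 : q ≤ 1 := exp_div_le_one (by linarith) hb.le
  have hrpq : r ≤ p * q := by
    rw [← exp_add, ← add_div]
    exact exp_le_exp.2 (div_le_div_of_nonneg_right (by linarith) hb.le)
  have hpq : exp (-t / b) = p * q := by rw [← exp_add]; ring_nf
  have hrpq' : exp (-(n - t) / b) = r / (p * q) := by rw [← hpq, ← exp_sub]; ring_nf
  have hrp : exp (-(n - s) / b) = r / p := by rw [← exp_sub]; ring_nf
  have hrq : exp (-(n - (t - s)) / b) = r / q := by rw [← exp_sub]; ring_nf
  rw [laplaceMass_zero, laplaceMass, laplaceMass, laplaceMass, hpq, hrpq', hrp, hrq]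
  exact two_sub_mul_sub_div_mul_one_sub_le (exp_pos _) (exp_pos _) hp1 hq1 (exp_pos _).le hrpq

lemma laplaceMass_mul_laplaceMass_zero_le_abs (hb : 0 < b) {lam lam' : ℝ}
    (hlam : lam ∈ Icc 0 n) (hlam' : lam' ∈ Icc 0 n) :
    laplaceMass n lam' b * laplaceMass n 0 b
      ≤ laplaceMass n lam b * laplaceMass n |lam - lam'| b := by
  rcases le_total lam lam' with h | h
  · rw [abs_sub_comm, abs_of_nonneg (sub_nonneg.2 h)]
    exact laplaceMass_mul_laplaceMass_zero_le hb hlam.1 h hlam'.2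
  · have := laplaceMass_mul_laplaceMass_zero_le (n := n) hb (sub_nonneg.2 hlam.2)
      (sub_le_sub_left h n) (sub_le_self n hlam'.1)
    rwa [laplaceMass_sub_left, sub_sub_sub_cancel_left, laplaceMass_sub_left,
      ← abs_of_nonneg (sub_nonneg.2 h)] at this

lemma laplaceMass_mul_exp_eq (t : ℝ) :
    laplaceMass n t b * exp (t / b) = 2 * exp (t / b) - 1 - exp (-n / b) * exp (t / b) ^ 2 := by
  have h1 : exp (-t / b) * exp (t / b) = 1 := by rw [← exp_add]; ring_nf; exact exp_zero
  have h2 : exp (-(n - t) / b) * exp (t / b) = exp (-n / b) * exp (t / b) ^ 2 := by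
    rw [sq, ← exp_add, ← exp_add, ← exp_add]; ring_nf
  rw [laplaceMass]
  linear_combination -h1 - h2

lemma monotoneOn_laplaceMass_mul_exp (hb : 0 < b) :
    MonotoneOn (fun t => laplaceMass n t b * exp (t / b)) (Iic n) := by
  intro d hd c hc hdc
  have hF : exp (-n / b) * exp (d / b) ≤ 1 := by
    rw [← exp_add, ← add_div]
    exact exp_div_le_one (by linarith [mem_Iic.1 hd]) hb.le
  have hE : exp (-n / b) * exp (c / b) ≤ 1 := by
    rw [← exp_add, ← add_div]
    exact exp_div_le_one (by linarith [mem_Iic.1 hc]) hb.le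
  have hdc' : exp (d / b) ≤ exp (c / b) := exp_le_exp.2 (div_le_div_of_nonneg_right hdc hb.le)
  simp only [laplaceMass_mul_exp_eq]
  nlinarith [mul_nonneg (sub_nonneg.2 hdc')
    (by linarith : (0 : ℝ) ≤ 2 - exp (-n / b) * exp (c / b) - exp (-n / b) * exp (d / b))]

end laplaceMass

lemma integral_exp_neg_abs_sub_right {b t : ℝ} (hb : 0 < b) (ht : 0 ≤ t) :
    ∫ x in (0 : ℝ)..t, exp (-|x - t| / b) = b * (1 - exp (-t / b)) := by
  have hderiv : ∀ x ∈ uIcc 0 t,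
      HasDerivAt (fun y => b * exp ((y - t) / b)) (exp ((x - t) / b)) x := by
    intro x _
    refine ((((hasDerivAt_id' x).sub_const t).div_const b).exp.const_mul b).congr_deriv ?_
    field_simp
  calc ∫ x in (0 : ℝ)..t, exp (-|x - t| / b)
      = ∫ x in (0 : ℝ)..t, exp ((x - t) / b) := by
        refine intervalIntegral.integral_congr fun x hx => ?_
        rw [uIcc_of_le ht] at hx
        simp only [abs_of_nonpos (sub_nonpos.2 hx.2), neg_neg]
    _ = b * (1 - exp (-t / b)) := by
        rw [intervalIntegral.integral_eq_sub_of_hasDerivAt hderiv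
          ((by fun_prop : Continuous fun x => exp ((x - t) / b)).intervalIntegrable 0 t)]
        simp only [sub_self, zero_div, exp_zero, zero_sub]
        ring

lemma Cnorm_eq {n : ℕ} {lam b : ℝ} (hb : 0 < b) (hlam : lam ∈ Icc 0 (n : ℝ)) :
    Cnorm n lam b = laplaceMass n lam b / 2 := by
  have hint : ∀ u v : ℝ, IntervalIntegrable (fun x => exp (-|x - lam| / b)) volume u v :=
    fun u v => (by fun_prop : Continuous fun x => exp (-|x - lam| / b)).intervalIntegrable u v
  have hright : ∫ x in lam..(n : ℝ), exp (-|x - lam| / b) = b * (1 - exp (-(n - lam) / b)) := by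
    calc ∫ x in lam..(n : ℝ), exp (-|x - lam| / b)
        = ∫ x in lam..(n : ℝ), exp (-|(n - x) - (n - lam)| / b) := by
          simp only [sub_sub_sub_cancel_left, abs_sub_comm]
      _ = b * (1 - exp (-(n - lam) / b)) := by
          rw [intervalIntegral.integral_comp_sub_left (fun y => exp (-|y - (n - lam)| / b)),
            sub_self, integral_exp_neg_abs_sub_right hb (sub_nonneg.2 hlam.2)]
  rw [Cnorm, intervalIntegral.integral_const_mul,
    ← intervalIntegral.integral_add_adjacent_intervals (hint 0 lam) (hint lam n),
    integral_exp_neg_abs_sub_right hb hlam.1, hright, laplaceMass]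
  field_simp
  ring

section boundedLaplace

variable {n : ℕ} {lam lam' b c : ℝ}

lemma boundedLaplace_density_le (hb : 0 < b) (hn : 0 < n) (hlam : lam ∈ Icc 0 (n : ℝ))
    (hlam' : lam' ∈ Icc 0 (n : ℝ)) (hdc : |lam - lam'| ≤ c) (hcn : c ≤ n) (x : ℝ) :
    1 / (2 * b * Cnorm n lam b) * exp (-|x - lam| / b)
      ≤ laplaceMass n c b / laplaceMass n 0 b * exp (c / b)
        * (1 / (2 * b * Cnorm n lam' b) * exp (-|x - lam'| / b)) := by
  have hn' : (0 : ℝ) < n := Nat.cast_pos.2 hn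
  have hg := laplaceMass_pos hb hn' hlam
  have hg' := laplaceMass_pos hb hn' hlam'
  have hg0 := laplaceMass_pos hb hn' (left_mem_Icc.2 hn'.le)
  have hshift : exp (-|x - lam| / b) ≤ exp (|lam - lam'| / b) * exp (-|x - lam'| / b) := by
    rw [← exp_add, ← add_div]
    refine exp_le_exp.2 (div_le_div_of_nonneg_right ?_ hb.le)
    linarith [abs_sub_le x lam lam']
  have hmass : laplaceMass n lam' b * exp (|lam - lam'| / b) * laplaceMass n 0 b
      ≤ laplaceMass n lam b * (laplaceMass n c b * exp (c / b)) := by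
    calc laplaceMass n lam' b * exp (|lam - lam'| / b) * laplaceMass n 0 b
        = laplaceMass n lam' b * laplaceMass n 0 b * exp (|lam - lam'| / b) := by ring
      _ ≤ laplaceMass n lam b * laplaceMass n |lam - lam'| b * exp (|lam - lam'| / b) :=
        mul_le_mul_of_nonneg_right (laplaceMass_mul_laplaceMass_zero_le_abs hb hlam hlam')
          (exp_pos _).le
      _ ≤ laplaceMass n lam b * (laplaceMass n c b * exp (c / b)) := by
        rw [mul_assoc]
        exact mul_le_mul_of_nonneg_left (monotoneOn_laplaceMass_mul_exp hb
          (mem_Iic.2 (hdc.trans hcn)) (mem_Iic.2 hcn) hdc) hg.le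
  set E := exp (-|x - lam| / b)
  set E' := exp (-|x - lam'| / b)
  rw [Cnorm_eq hb hlam, Cnorm_eq hb hlam']
  field_simp
  linarith [mul_le_mul_of_nonneg_left hshift (mul_nonneg hg0.le hg'.le),
    mul_le_mul_of_nonneg_right hmass (exp_pos (-|x - lam'| / b)).le]

lemma boundedLaplace_le_smul (hb : 0 < b) (hn : 0 < n) (hlam : lam ∈ Icc 0 (n : ℝ))
    (hlam' : lam' ∈ Icc 0 (n : ℝ)) (hdc : |lam - lam'| ≤ c) (hcn : c ≤ n) :
    boundedLaplace n lam b
      ≤ ENNReal.ofReal (laplaceMass n c b / laplaceMass n 0 b * exp (c / b))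
        • boundedLaplace n lam' b := by
  have hn' : (0 : ℝ) < n := Nat.cast_pos.2 hn
  have hK : 0 ≤ laplaceMass n c b / laplaceMass n 0 b * exp (c / b) :=
    mul_nonneg (div_nonneg (laplaceMass_pos hb hn' ⟨(abs_nonneg _).trans hdc, hcn⟩).le
      (laplaceMass_pos hb hn' (left_mem_Icc.2 hn'.le)).le) (exp_pos _).le
  rw [boundedLaplace, boundedLaplace, ← withDensity_smul' _ _ ENNReal.ofReal_ne_top]
  refine withDensity_mono (Filter.Eventually.of_forall fun x => ?_)
  simp only [Pi.smul_apply, smul_eq_mul]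
  split_ifs
  · rw [← ENNReal.ofReal_mul hK]
    exact ENNReal.ofReal_le_ofReal (boundedLaplace_density_le hb hn hlam hlam' hdc hcn x)
  · exact bot_le

lemma isProbabilityMeasure_boundedLaplace (hb : 0 < b) (hn : 0 < n)
    (hlam : lam ∈ Icc 0 (n : ℝ)) :
    IsProbabilityMeasure (boundedLaplace n lam b) := by
  have hC : 0 < Cnorm n lam b := by
    rw [Cnorm_eq hb hlam]
    exact half_pos (laplaceMass_pos hb (Nat.cast_pos.2 hn) hlam)
  have hcont : Continuous fun x => 1 / (2 * b * Cnorm n lam b) * exp (-|x - lam| / b) := by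
    fun_prop
  constructor
  rw [boundedLaplace, withDensity_apply _ MeasurableSet.univ, Measure.restrict_univ,
    ← lintegral_add_compl _ measurableSet_Icc,
    setLIntegral_congr_fun measurableSet_Icc (fun x hx => if_pos hx),
    setLIntegral_congr_fun measurableSet_Icc.compl (fun x hx => if_neg hx), lintegral_zero,
    add_zero, ← ofReal_integral_eq_lintegral_ofReal
    hcont.integrableOn_Icc (Filter.Eventually.of_forall fun x => by positivity),
    integral_Icc_eq_integral_Ioc, ← intervalIntegral.integral_of_le (Nat.cast_nonneg n)]
  have hfactor : ∀ x, 1 / (2 * b * Cnorm n lam b) * exp (-|x - lam| / b)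
      = (Cnorm n lam b)⁻¹ * (1 / (2 * b) * exp (-|x - lam| / b)) := fun x => by
    field_simp
  rw [intervalIntegral.integral_congr fun x _ => hfactor x, intervalIntegral.integral_const_mul,
    ← Cnorm, inv_mul_cancel₀ hC.ne', ENNReal.ofReal_one]

end boundedLaplace

lemma ENNReal.le_ofReal_mul_add_ofReal {x y : ENNReal} {r δ : ℝ} (hr : 0 ≤ r) (hδ₀ : 0 ≤ δ)
    (hδ₁ : δ < 1) (hx : x ≤ 1) (hy : y ≠ ⊤) (hxy : x ≤ ENNReal.ofReal (r / (1 - δ)) * y) :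
    x ≤ ENNReal.ofReal r * y + ENNReal.ofReal δ := by
  obtain ⟨m, hm, rfl⟩ : ∃ m, 0 ≤ m ∧ ENNReal.ofReal m = y :=
    ⟨y.toReal, ENNReal.toReal_nonneg, ENNReal.ofReal_toReal hy⟩
  obtain ⟨a, rfl⟩ : ∃ a, ENNReal.ofReal a = x :=
    ⟨x.toReal, ENNReal.ofReal_toReal (ne_top_of_le_ne_top ENNReal.one_ne_top hx)⟩
  have hδ : 0 < 1 - δ := sub_pos.2 hδ₁
  rw [← ENNReal.ofReal_one, ENNReal.ofReal_le_ofReal_iff zero_le_one] at hx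
  rw [← ENNReal.ofReal_mul (by positivity), ENNReal.ofReal_le_ofReal_iff (by positivity)] at hxy
  rw [← ENNReal.ofReal_mul hr, ← ENNReal.ofReal_add (by positivity) hδ₀]
  refine ENNReal.ofReal_le_ofReal ?_
  rcases le_or_gt 1 (r * m + δ) with h | h
  · linarith
  · calc a ≤ r / (1 - δ) * m := hxy
      _ ≤ r * m + δ := by
        rw [div_mul_eq_mul_div, div_le_iff₀ hδ]
        nlinarith [mul_nonneg hδ₀ (sub_nonneg.2 h.le)]

lemma mul_exp_div_le_exp_div_one_sub {Δ δ ε c b : ℝ} (hΔ : 0 < Δ) (hδ : δ < 1) (hb : 0 < b)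
    (hpos : 0 < ε - log Δ - log (1 - δ)) (hcb : c / (ε - log Δ - log (1 - δ)) ≤ b) :
    Δ * exp (c / b) ≤ exp ε / (1 - δ) := by
  have hδ' : 0 < 1 - δ := sub_pos.2 hδ
  have hc : c / b ≤ ε - log Δ - log (1 - δ) := by
    rw [div_le_iff₀ hb]
    rw [div_le_iff₀ hpos] at hcb
    linarith
  calc Δ * exp (c / b) ≤ Δ * exp (ε - log Δ - log (1 - δ)) := by gcongr
    _ = exp ε / (1 - δ) := by
      rw [exp_sub, exp_sub, exp_log hΔ, exp_log hδ']
      field_simp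

theorem bounded_laplace_edge_dp_general (ε δ : ℝ) (hδ : δ ∈ Set.Ioo (0 : ℝ) 1)
    (n A : ℕ) (hA : 0 < 2 * A) (hAn : 2 * A ≤ n) (b : ℝ) (hb : 0 < b)
    (hpos : 0 < ε - Real.log ((2 - Real.exp (-(2 * A : ℝ) / b)
        - Real.exp (-((n : ℝ) - 2 * A) / b)) / (1 - Real.exp (-(n : ℝ) / b)))
      - Real.log (1 - δ))
    (hbge : (2 * A : ℝ) / (ε - Real.log ((2 - Real.exp (-(2 * A : ℝ) / b)
        - Real.exp (-((n : ℝ) - 2 * A) / b)) / (1 - Real.exp (-(n : ℝ) / b)))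
      - Real.log (1 - δ)) ≤ b)
    (lam lam' : ℝ) (hlam : lam ∈ Set.Icc (0 : ℝ) (n : ℝ))
    (hlam' : lam' ∈ Set.Icc (0 : ℝ) (n : ℝ)) (hdiff : |lam - lam'| ≤ 2 * A)
    (S : Set ℝ) :
    boundedLaplace n lam b S
      ≤ ENNReal.ofReal (Real.exp ε) * boundedLaplace n lam' b S + ENNReal.ofReal δ := by
  have hn : 0 < n := hA.trans_le hAn
  have hn' : (0 : ℝ) < n := Nat.cast_pos.2 hn
  have h2An : (2 * A : ℝ) ≤ n := by exact_mod_cast hAn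
  rw [← laplaceMass_zero] at hpos hbge
  have hΔ : 0 < laplaceMass n (2 * A) b / laplaceMass n 0 b :=
    div_pos (laplaceMass_pos hb hn' ⟨by positivity, h2An⟩)
      (laplaceMass_pos hb hn' (left_mem_Icc.2 hn'.le))
  have := isProbabilityMeasure_boundedLaplace hb hn hlam
  have := isProbabilityMeasure_boundedLaplace hb hn hlam'
  refine ENNReal.le_ofReal_mul_add_ofReal (exp_pos ε).le hδ.1.le hδ.2 prob_le_one
    (measure_ne_top _ S) ?_
  calc boundedLaplace n lam b S
      ≤ ENNReal.ofReal (laplaceMass n (2 * A) b / laplaceMass n 0 b * exp (2 * A / b))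
        * boundedLaplace n lam' b S := boundedLaplace_le_smul hb hn hlam hlam' hdiff h2An S
    _ ≤ ENNReal.ofReal (exp ε / (1 - δ)) * boundedLaplace n lam' b S := by
      gcongr
      exact mul_exp_div_le_exp_div_one_sub hΔ hδ.2 hb hpos hbge

/-- Edge differential privacy of the bounded Laplace mechanism: if
`b ≥ 2A / (ε − log ΔC(b) − log(1 − δ))`, where
`ΔC(b) = (2 − e^{−2A/b} − e^{−(n−2A)/b})/(1 − e^{−n/b})`, then for any `λ, λ' ∈ [0, n]`
with `|λ − λ'| ≤ 2A` (in particular for corresponding Laplacian eigenvalues of two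
`A`-edge-adjacent graphs on `n` vertices), and any Borel `S ⊆ ℝ`,
`μ_{λ,b}(S) ≤ e^ε μ_{λ',b}(S) + δ`. -/
theorem bounded_laplace_edge_dp (ε δ : ℝ) (hε : 0 < ε) (hδ : δ ∈ Set.Ioo (0 : ℝ) 1)
    (n A : ℕ) (hA : 0 < 2 * A) (hAn : 2 * A ≤ n) (b : ℝ) (hb : 0 < b)
    (hpos : 0 < ε - Real.log ((2 - Real.exp (-(2 * A : ℝ) / b)
        - Real.exp (-((n : ℝ) - 2 * A) / b)) / (1 - Real.exp (-(n : ℝ) / b)))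
      - Real.log (1 - δ))
    (hbge : (2 * A : ℝ) / (ε - Real.log ((2 - Real.exp (-(2 * A : ℝ) / b)
        - Real.exp (-((n : ℝ) - 2 * A) / b)) / (1 - Real.exp (-(n : ℝ) / b)))
      - Real.log (1 - δ)) ≤ b)
    (lam lam' : ℝ) (hlam : lam ∈ Set.Icc (0 : ℝ) (n : ℝ))
    (hlam' : lam' ∈ Set.Icc (0 : ℝ) (n : ℝ)) (hdiff : |lam - lam'| ≤ 2 * A)
    (S : Set ℝ) (hS : MeasurableSet S) :
    boundedLaplace n lam b S
      ≤ ENNReal.ofReal (Real.exp ε) * boundedLaplace n lam' b S + ENNReal.ofReal δ :=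
  bounded_laplace_edge_dp_general ε δ hδ n A hA hAn b hb hpos hbge lam lam' hlam hlam' hdiff S
end

section
/- For every n ∈ ℕ with n ≥ 1, every λ ∈ [0, n], and every b > 0, one has ∫_0^n x · e^{−|x−λ|/b} dx = b · (2λ + b·e^{−λ/b} − (n + b)·e^{−(n−λ)/b}). Consequently, the mean of the bounded Laplace distribution μ_{λ,b} is ∫ x dμ_{λ,b}(x) = (1/(2·C(λ, b))) · (2λ + b·e^{−λ/b} − (n + b)·e^{−(n−λ)/b}). -/
/-!
Split `[0, n]` at `λ`: on either side `x e^{-|x-λ|/b} = x e^{(x-λ)/β}` with `β = ±b`, which has the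
antiderivative `β (x - β) e^{(x-λ)/β}`. The mean is this first moment times the constant
`1/(2b C(λ,b))` of the density, which vanishes off `[0, n]`.
-/

open MeasureTheory Set Real

theorem hasDerivAt_mul_exp_sub_div {b : ℝ} (hb : b ≠ 0) (lam x : ℝ) :
    HasDerivAt (fun x => b * (x - b) * exp ((x - lam) / b)) (x * exp ((x - lam) / b)) x := by
  have hlin : HasDerivAt (fun x => b * (x - b)) b x := by
    simpa using ((hasDerivAt_id x).sub_const b).const_mul b
  have hexp : HasDerivAt (fun x => exp ((x - lam) / b)) (exp ((x - lam) / b) * (1 / b)) x := by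
    simpa using (((hasDerivAt_id x).sub_const lam).div_const b).exp
  refine (hlin.mul hexp).congr_deriv ?_
  field_simp
  ring

theorem integral_mul_exp_sub_div {b : ℝ} (hb : b ≠ 0) (lam a c : ℝ) :
    ∫ x in a..c, x * exp ((x - lam) / b)
      = b * (c - b) * exp ((c - lam) / b) - b * (a - b) * exp ((a - lam) / b) :=
  intervalIntegral.integral_eq_sub_of_hasDerivAt
    (fun x _ => hasDerivAt_mul_exp_sub_div hb lam x)
    ((by fun_prop : Continuous fun x => x * exp ((x - lam) / b)).intervalIntegrable a c)

theorem integral_mul_exp_neg_abs_sub_div {a c lam b : ℝ} (hb : b ≠ 0) (ha : a ≤ lam)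
    (hc : lam ≤ c) :
    ∫ x in a..c, x * exp (-|x - lam| / b)
      = b * (2 * lam - (a - b) * exp (-(lam - a) / b) - (c + b) * exp (-(c - lam) / b)) := by
  have hcont : Continuous fun x => x * exp (-|x - lam| / b) := by fun_prop
  have hleft : ∫ x in a..lam, x * exp (-|x - lam| / b)
      = ∫ x in a..lam, x * exp ((x - lam) / b) := by
    refine intervalIntegral.integral_congr fun x hx => ?_
    rw [uIcc_of_le ha] at hx
    simp only [abs_of_nonpos (sub_nonpos.2 hx.2), neg_sub]
  -- Right of `lam` the integrand is the left one with scale `-b`, so one antiderivative serves both.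
  have hright : ∫ x in lam..c, x * exp (-|x - lam| / b)
      = ∫ x in lam..c, x * exp ((x - lam) / -b) := by
    refine intervalIntegral.integral_congr fun x hx => ?_
    rw [uIcc_of_le hc] at hx
    simp only [abs_of_nonneg (sub_nonneg.2 hx.1), div_neg, neg_div]
  rw [← intervalIntegral.integral_add_adjacent_intervals (hcont.intervalIntegrable a lam)
    (hcont.intervalIntegrable lam c), hleft, hright, integral_mul_exp_sub_div hb,
    integral_mul_exp_sub_div (neg_ne_zero.2 hb)]
  simp only [sub_self, zero_div, exp_zero]
  ring_nf

theorem Cnorm_nonneg (n : ℕ) (lam : ℝ) {b : ℝ} (hb : 0 ≤ b) : 0 ≤ Cnorm n lam b :=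
  intervalIntegral.integral_nonneg (Nat.cast_nonneg n) fun x _ => by positivity

theorem integral_withDensity_ite_Icc {a c : ℝ} (hac : a ≤ c) {f : ℝ → ℝ} (hf : Measurable f)
    (hf_nonneg : ∀ x ∈ Icc a c, 0 ≤ f x) (g : ℝ → ℝ) :
    ∫ x, g x ∂volume.withDensity (fun x => if x ∈ Icc a c then ENNReal.ofReal (f x) else 0)
      = ∫ x in a..c, g x * f x := by
  have hdensity : (fun x => ((if x ∈ Icc a c then ENNReal.ofReal (f x) else 0).toReal • g x))
      = (Icc a c).indicator fun x => g x * f x := by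
    ext x
    by_cases hx : x ∈ Icc a c
    · simp [hx, ENNReal.toReal_ofReal (hf_nonneg x hx), mul_comm]
    · simp [hx]
  have hmeas : Measurable fun x => if x ∈ Icc a c then ENNReal.ofReal (f x) else 0 :=
    Measurable.ite measurableSet_Icc hf.ennreal_ofReal measurable_const
  rw [integral_withDensity_eq_integral_toReal_smul hmeas
      (ae_of_all _ fun x => by split_ifs <;> simp),
    hdensity, integral_indicator measurableSet_Icc, integral_Icc_eq_integral_Ioc,
    intervalIntegral.integral_of_le hac]

theorem bounded_laplace_mean_general (n : ℕ) (lam b : ℝ)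
    (hlam : lam ∈ Set.Icc (0 : ℝ) (n : ℝ)) (hb : 0 < b) :
    (∫ x in (0 : ℝ)..(n : ℝ), x * Real.exp (-|x - lam| / b)
        = b * (2 * lam + b * Real.exp (-lam / b)
          - ((n : ℝ) + b) * Real.exp (-((n : ℝ) - lam) / b))) ∧
      (∫ x, x ∂(boundedLaplace n lam b)
        = (1 / (2 * Cnorm n lam b)) * (2 * lam + b * Real.exp (-lam / b)
          - ((n : ℝ) + b) * Real.exp (-((n : ℝ) - lam) / b))) := by
  have hmoment : ∫ x in (0 : ℝ)..(n : ℝ), x * exp (-|x - lam| / b)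
      = b * (2 * lam + b * exp (-lam / b) - ((n : ℝ) + b) * exp (-((n : ℝ) - lam) / b)) := by
    rw [integral_mul_exp_neg_abs_sub_div hb.ne' hlam.1 hlam.2]
    ring_nf
  refine ⟨hmoment, ?_⟩
  have hC := Cnorm_nonneg n lam hb.le
  rw [boundedLaplace, integral_withDensity_ite_Icc (Nat.cast_nonneg n) (by fun_prop)
    (fun x _ => by positivity),
    intervalIntegral.integral_congr fun x _ => mul_left_comm x (1 / (2 * b * Cnorm n lam b)) _,
    intervalIntegral.integral_const_mul, hmoment, ← mul_assoc, one_div_mul_eq_div, mul_comm 2 b,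
    mul_assoc, div_mul_cancel_left₀ hb.ne', one_div]

/-- The first-moment integral of the bounded Laplace density:
`∫_0^n x e^{−|x−λ|/b} dx = b(2λ + b e^{−λ/b} − (n+b) e^{−(n−λ)/b})`, and consequently
the mean of the bounded Laplace distribution is
`(1/(2C(λ,b)))(2λ + b e^{−λ/b} − (n+b) e^{−(n−λ)/b})`. -/
theorem bounded_laplace_mean (n : ℕ) (hn : 1 ≤ n) (lam b : ℝ)
    (hlam : lam ∈ Set.Icc (0 : ℝ) (n : ℝ)) (hb : 0 < b) :
    (∫ x in (0 : ℝ)..(n : ℝ), x * Real.exp (-|x - lam| / b)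
        = b * (2 * lam + b * Real.exp (-lam / b)
          - ((n : ℝ) + b) * Real.exp (-((n : ℝ) - lam) / b))) ∧
      (∫ x, x ∂(boundedLaplace n lam b)
        = (1 / (2 * Cnorm n lam b)) * (2 * lam + b * Real.exp (-lam / b)
          - ((n : ℝ) + b) * Real.exp (-((n : ℝ) - lam) / b))) :=
  bounded_laplace_mean_general n lam b hlam hb
end
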